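/- Let M be an irreducible Markov chain on a countable state space V, let A ⊆ W be a tail event, let ε > 0 and κ ∈ (0,1] with ε/κ ≤ 1/2, and let U ⊆ V. If v ∈ A_ε and the chain started at v visits U with probability at least κ, then there is a finite path v = v_0, v_1, …, v_m with p(v_i, v_{i+1}) > 0 for each i < m, v_m ∈ U, and v_i ∈ A_{ε/κ} for all i. The analogous statement holds with Z in place of A. -/

import Mathlib

open MeasureTheory Filter Set Topology
open scoped Classical

/-- An irreducible Markov chain on a countable state space `V`, given together with
its family of path-space laws `μ z` (the law of the chain started at `z`),
characterised on cylinder sets by the transition probabilities. -/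
structure MarkovChain (V : Type*) [Countable V] [MeasurableSpace V] where
  /-- transition probabilities -/
  p : V → V → ℝ
  p_nonneg : ∀ x y, 0 ≤ p x y
  p_row_sum : ∀ x, HasSum (p x) 1
  irred : ∀ x y : V, ∃ (n : ℕ) (w : ℕ → V),
    w 0 = x ∧ w n = y ∧ ∀ i < n, 0 < p (w i) (w (i + 1))
  /-- the law of the chain started at `z`, on the path space `ℕ → V` -/
  μ : V → Measure (ℕ → V)
  μ_prob : ∀ z, IsProbabilityMeasure (μ z)
  μ_cyl : ∀ (z : V) (n : ℕ) (w : ℕ → V),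
    (μ z {ω : ℕ → V | ∀ i ≤ n, ω i = w i}).toReal =
      if w 0 = z then ∏ i ∈ Finset.range n, p (w i) (w (i + 1)) else 0

variable {V : Type*} [Countable V] [MeasurableSpace V]

/-- `h : V → ℝ` is harmonic if `h x = ∑_y p x y * h y` for every `x`. -/
def IsHarmonic (M : MarkovChain V) (h : V → ℝ) : Prop :=
  ∀ x, HasSum (fun y => M.p x y * h y) (h x)

/-- The event `1^s` that the values of `s` along the trajectory converge to `1`. -/
def oneEvent (s : V → ℝ) : Set (ℕ → V) :=
  {ω | Tendsto (fun n => s (ω n)) atTop (𝓝 1)}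

/-- The event `0^s` that the values of `s` along the trajectory converge to `0`. -/
def zeroEvent (s : V → ℝ) : Set (ℕ → V) :=
  {ω | Tendsto (fun n => s (ω n)) atTop (𝓝 0)}

/-- A harmonic function `s : V → [0,1]` is sharp if, for every starting state,
the values of `s` along the trajectory of the chain converge to `0` or `1`
almost surely. -/
def IsSharp (M : MarkovChain V) (s : V → ℝ) : Prop :=
  IsHarmonic M s ∧ (∀ x, s x ∈ Set.Icc (0 : ℝ) 1) ∧
  ∀ z, ∀ᵐ ω ∂ M.μ z,
    Tendsto (fun n => s (ω n)) atTop (𝓝 0) ∨ Tendsto (fun n => s (ω n)) atTop (𝓝 1)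

/-- A tail event: a measurable event invariant under deleting the first step. -/
def IsTailEvent (A : Set (ℕ → V)) : Prop :=
  MeasurableSet A ∧ (fun ω : ℕ → V => fun n => ω (n + 1)) ⁻¹' A = A

/-- An `M`-boundary: a measurable space `N` with measures `ν z`, `z ∈ V`, and a
measurable, shift-invariant, measure-preserving map `f` from path space to `N`. -/
structure MBoundary (M : MarkovChain V) (N : Type*) [MeasurableSpace N] where
  ν : V → Measure N
  f : (ℕ → V) → N
  f_meas : Measurable f
  shift_inv : ∀ ω : ℕ → V, f (fun n => ω (n + 1)) = f ω
  meas_pres : ∀ (z : V) (X : Set N), MeasurableSet X → ν z X = M.μ z (f ⁻¹' X)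

/-- The `M`-boundary is faithful to a sharp harmonic function `s` if some measurable
`X ⊆ N` satisfies `μ_z (1^s △ f⁻¹ X) = 0` for every `z`. -/
def Faithful {N : Type*} [MeasurableSpace N] (M : MarkovChain V) (B : MBoundary M N)
    (s : V → ℝ) : Prop :=
  ∃ X : Set N, MeasurableSet X ∧ ∀ z, M.μ z (symmDiff (oneEvent s) (B.f ⁻¹' X)) = 0

/-- The `M`-boundary is a realisation of the Poisson boundary: every bounded harmonic
function is the integral of an essentially unique bounded measurable function on `N`,
and conversely integrating any bounded measurable function on `N` gives a bounded
harmonic function. -/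
def IsRealisation {N : Type*} [MeasurableSpace N] (M : MarkovChain V)
    (B : MBoundary M N) : Prop :=
  (∀ h : V → ℝ, IsHarmonic M h → (∃ C, ∀ x, |h x| ≤ C) →
    ∃ hhat : N → ℝ, Measurable hhat ∧ (∃ C, ∀ η, |hhat η| ≤ C) ∧
      (∀ z, h z = ∫ η, hhat η ∂ B.ν z) ∧
      (∀ g : N → ℝ, Measurable g → (∃ C, ∀ η, |g η| ≤ C) →
        (∀ z, h z = ∫ η, g η ∂ B.ν z) → ∀ z, hhat =ᵐ[B.ν z] g)) ∧
  (∀ g : N → ℝ, Measurable g → (∃ C, ∀ η, |g η| ≤ C) →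
    (∃ C, ∀ z, |∫ η, g η ∂ B.ν z| ≤ C) ∧ IsHarmonic M (fun z => ∫ η, g η ∂ B.ν z))

/-- `A_r`: the set of states from which the tail event `A` holds with probability
greater than `1 - r`. -/
def tailBig (M : MarkovChain V) (A : Set (ℕ → V)) (r : ℝ) : Set V :=
  {v | (M.μ v A).toReal > 1 - r}

/-- `Z_r`: the set of states from which the tail event `A` holds with probability
less than `r`. -/
def tailSmall (M : MarkovChain V) (A : Set (ℕ → V)) (r : ℝ) : Set V :=
  {v | (M.μ v A).toReal < r}

/-!
Suppose there is no such path and let `G` be the complement of `A_{ε/κ}`. Almost every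
trajectory from `v` moves along positive transitions, so up to any time at which it is in `U` it
is itself such a path; hence it cannot visit `U` without visiting `G`, and `P_v(hit G) ≥ κ`.
From every state of `G` the event `Aᶜ` has probability at least `ε/κ`. Splitting the first visit
to `G` into cylinders and applying the Markov property on each (the shift leaves `A` unchanged)
gives `P_v(Aᶜ) ≥ (ε/κ) P_v(hit G) ≥ ε`, contradicting `v ∈ A_ε`. For `Z`, apply this to `Aᶜ`.
-/

open scoped ENNReal

section PathSpace

variable {α : Type*}

def pathShift (k : ℕ) (ω : ℕ → α) : ℕ → α := fun n => ω (n + k)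

lemma preimage_pathShift_of_shift_invariant {A : Set (ℕ → α)}
    (hA : (fun ω : ℕ → α => fun n => ω (n + 1)) ⁻¹' A = A) (k : ℕ) :
    pathShift k ⁻¹' A = A := by
  induction k with
  | zero => rfl
  | succ k ih =>
    change (fun ω : ℕ → α => fun n => ω (n + 1)) ⁻¹' (pathShift k ⁻¹' A) = A
    rw [ih, hA]

def prefixCylinder (n : ℕ) (w : ℕ → α) : Set (ℕ → α) := {ω | ∀ i ≤ n, ω i = w i}

lemma mem_prefixCylinder {n : ℕ} {w ω : ℕ → α} :
    ω ∈ prefixCylinder n w ↔ ∀ i ≤ n, ω i = w i :=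
  Iff.rfl

lemma prefixCylinder_inter_prefixCylinder_of_le {n m : ℕ} {w u : ℕ → α} (h : n ≤ m)
    (hne : (prefixCylinder n w ∩ prefixCylinder m u).Nonempty) :
    prefixCylinder n w ∩ prefixCylinder m u = prefixCylinder m u := by
  obtain ⟨ω, hω, hω'⟩ := hne
  refine inter_eq_right.2 fun ω'' h'' i hi => ?_
  rw [h'' i (hi.trans h), ← hω' i (hi.trans h), hω i hi]

lemma isPiSystem_prefixCylinder :
    IsPiSystem {s : Set (ℕ → α) | ∃ n w, s = prefixCylinder n w} := by
  rintro _ ⟨n, w, rfl⟩ _ ⟨m, u, rfl⟩ hne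
  rcases le_total n m with h | h
  · exact ⟨m, u, prefixCylinder_inter_prefixCylinder_of_le h hne⟩
  · rw [inter_comm] at hne ⊢
    exact ⟨n, w, prefixCylinder_inter_prefixCylinder_of_le h hne⟩

def pathPrefix (n : ℕ) (ω : ℕ → α) : Fin (n + 1) → α := fun i => ω i

lemma prefixCylinder_eq_preimage_pathPrefix (n : ℕ) (w : ℕ → α) :
    prefixCylinder n w = pathPrefix n ⁻¹' {pathPrefix n w} := by
  ext ω
  simp only [mem_prefixCylinder, mem_preimage, mem_singleton_iff, funext_iff, pathPrefix,
    Fin.forall_iff, Nat.lt_succ_iff]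

lemma preimage_image_pathPrefix {n : ℕ} {F : Set (ℕ → α)}
    (hF : ∀ ω ∈ F, prefixCylinder n ω ⊆ F) :
    pathPrefix n ⁻¹' (pathPrefix n '' F) = F := by
  refine Subset.antisymm ?_ (subset_preimage_image _ _)
  rintro ω ⟨ω', hω', h⟩
  exact hF ω' hω' (by rw [prefixCylinder_eq_preimage_pathPrefix]; exact h.symm)

def pathConcat (k : ℕ) (u w : ℕ → α) : ℕ → α := fun i => if i ≤ k then u i else w (i - k)

lemma pathConcat_of_le {k i : ℕ} (u w : ℕ → α) (h : i ≤ k) : pathConcat k u w i = u i :=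
  if_pos h

lemma pathConcat_add {k : ℕ} {u w : ℕ → α} (h : w 0 = u k) (i : ℕ) :
    pathConcat k u w (k + i) = w i := by
  rcases i.eq_zero_or_pos with rfl | hi
  · exact (pathConcat_of_le u w le_rfl).trans h.symm
  · simp [pathConcat, hi.ne']

lemma prefixCylinder_inter_preimage_pathShift {k m : ℕ} {u w : ℕ → α} (h : w 0 = u k) :
    prefixCylinder k u ∩ pathShift k ⁻¹' prefixCylinder m w =
      prefixCylinder (k + m) (pathConcat k u w) := by
  ext ω
  simp only [mem_prefixCylinder, pathShift, mem_inter_iff, mem_preimage]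
  constructor
  · rintro ⟨hu, hw⟩ i hi
    rcases le_or_gt i k with hik | hik
    · rw [pathConcat_of_le u w hik, hu i hik]
    · obtain ⟨j, rfl⟩ := Nat.exists_eq_add_of_lt hik
      rw [show k + j + 1 = k + (j + 1) by ring, pathConcat_add h, ← hw (j + 1) (by omega),
        add_comm]
  · intro hc
    refine ⟨fun i hi => (hc i (by omega)).trans (pathConcat_of_le u w hi), fun i hi => ?_⟩
    rw [add_comm, hc (k + i) (by omega), pathConcat_add h]

lemma prod_range_pathConcat {β : Type*} [CommMonoid β] (f : α → α → β) {k m : ℕ}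
    {u w : ℕ → α} (h : w 0 = u k) :
    ∏ i ∈ Finset.range (k + m), f (pathConcat k u w i) (pathConcat k u w (i + 1)) =
      (∏ i ∈ Finset.range k, f (u i) (u (i + 1))) *
        ∏ i ∈ Finset.range m, f (w i) (w (i + 1)) := by
  rw [Finset.prod_range_add]
  congr 1
  · refine Finset.prod_congr rfl fun i hi => ?_
    have hi := Finset.mem_range.1 hi
    rw [pathConcat_of_le u w hi.le, pathConcat_of_le u w hi]
  · refine Finset.prod_congr rfl fun i _ => ?_
    rw [pathConcat_add h, add_assoc, pathConcat_add h]

variable [MeasurableSpace α]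

lemma IsTailEvent.compl {A : Set (ℕ → α)} (hA : IsTailEvent A) : IsTailEvent Aᶜ :=
  ⟨hA.1.compl, by rw [preimage_compl, hA.2]⟩

lemma measurable_pathShift (k : ℕ) : Measurable (pathShift (α := α) k) :=
  measurable_pi_lambda _ fun _ => measurable_pi_apply _

lemma measurable_pathPrefix (n : ℕ) : Measurable (pathPrefix (α := α) n) :=
  measurable_pi_lambda _ fun _ => measurable_pi_apply _

lemma measurableSet_prefixCylinder [MeasurableSingletonClass α] (n : ℕ) (w : ℕ → α) :
    MeasurableSet (prefixCylinder n w) := by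
  rw [prefixCylinder_eq_preimage_pathPrefix]
  exact measurable_pathPrefix n (measurableSet_singleton _)

lemma measurableSpace_pi_eq_generateFrom_prefixCylinder [Countable α]
    [MeasurableSingletonClass α] :
    (MeasurableSpace.pi : MeasurableSpace (ℕ → α)) =
      MeasurableSpace.generateFrom {s | ∃ n w, s = prefixCylinder n w} := by
  refine le_antisymm ?_ (MeasurableSpace.generateFrom_le ?_)
  · rw [MeasurableSpace.pi_eq_generateFrom_projections]
    refine MeasurableSpace.generateFrom_le ?_
    rintro _ ⟨i, S, -, rfl⟩
    have hF : ∀ ω ∈ Function.eval i ⁻¹' S, prefixCylinder i ω ⊆ Function.eval i ⁻¹' S :=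
      fun ω hω ω' hω' => by simpa [hω' i le_rfl] using hω
    rw [← preimage_image_pathPrefix hF, ← biUnion_preimage_singleton]
    refine MeasurableSet.biUnion (to_countable _) ?_
    rintro _ ⟨ω, -, rfl⟩
    rw [← prefixCylinder_eq_preimage_pathPrefix]
    exact MeasurableSpace.measurableSet_generateFrom ⟨i, ω, rfl⟩
  · rintro _ ⟨n, w, rfl⟩
    exact measurableSet_prefixCylinder n w

lemma measure_eq_zero_of_prefixCylinder [Countable α] {μ : Measure (ℕ → α)} {n : ℕ}
    {F : Set (ℕ → α)} (hF : ∀ ω ∈ F, prefixCylinder n ω ⊆ F)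
    (h : ∀ ω ∈ F, μ (prefixCylinder n ω) = 0) : μ F = 0 := by
  rw [← preimage_image_pathPrefix hF, measure_preimage_eq_zero_iff_of_countable (to_countable _)]
  rintro _ ⟨ω, hω, rfl⟩
  rw [← prefixCylinder_eq_preimage_pathPrefix]
  exact h ω hω

end PathSpace

lemma mem_iff_mem_of_measurableSet_pi {ι : Type*} {β : ι → Type*} [∀ i, MeasurableSpace (β i)]
    {x y : ∀ i, β i} (h : ∀ i s, MeasurableSet s → (x i ∈ s ↔ y i ∈ s))
    {E : Set (∀ i, β i)} (hE : MeasurableSet E) : x ∈ E ↔ y ∈ E := by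
  rw [MeasurableSpace.pi_eq_generateFrom_projections] at hE
  refine MeasurableSpace.forall_generateFrom_mem_iff_mem_iff.2 ?_ E hE
  rintro _ ⟨i, s, hs, rfl⟩
  exact h i s hs

namespace MarkovChain

instance (M : MarkovChain V) (z : V) : IsProbabilityMeasure (M.μ z) := M.μ_prob z

lemma measure_prefixCylinder (M : MarkovChain V) (z : V) (n : ℕ) (w : ℕ → V) :
    M.μ z (prefixCylinder n w) =
      ENNReal.ofReal (if w 0 = z then ∏ i ∈ Finset.range n, M.p (w i) (w (i + 1)) else 0) := by
  rw [← M.μ_cyl z n w, ENNReal.ofReal_toReal (measure_ne_top _ _)]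
  rfl

lemma ae_start (M : MarkovChain V) (z : V) : ∀ᵐ ω ∂M.μ z, ω 0 = z := by
  have hcover : {ω : ℕ → V | ¬ω 0 = z} ⊆ ⋃ x : {x // x ≠ z}, prefixCylinder 0 fun _ => x.1 :=
    fun ω hω => mem_iUnion.2 ⟨⟨ω 0, hω⟩, by simp [mem_prefixCylinder]⟩
  refine ae_iff.2 (measure_mono_null hcover (measure_iUnion_null fun x => ?_))
  simp [measure_prefixCylinder, x.2]

lemma ae_pos_step (M : MarkovChain V) (z : V) :
    ∀ᵐ ω ∂M.μ z, ∀ n, 0 < M.p (ω n) (ω (n + 1)) := by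
  refine ae_all_iff.2 fun n => ae_iff.2 (measure_eq_zero_of_prefixCylinder (n := n + 1) ?_ ?_)
  · intro ω hω ω' hω'
    simpa [mem_ofPred_eq, hω' n (by omega), hω' (n + 1) le_rfl] using hω
  · intro ω (hω : ¬0 < M.p (ω n) (ω (n + 1)))
    rw [measure_prefixCylinder]
    split_ifs
    · rw [Finset.prod_eq_zero (Finset.self_mem_range_succ n)
        (le_antisymm (not_lt.1 hω) (M.p_nonneg _ _)), ENNReal.ofReal_zero]
    · exact ENNReal.ofReal_zero

lemma measure_first_step (M : MarkovChain V) (z x : V) :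
    M.μ z {ω | ω 0 = z ∧ ω 1 = x} = ENNReal.ofReal (M.p z x) := by
  have : {ω : ℕ → V | ω 0 = z ∧ ω 1 = x} = prefixCylinder 1 fun i => if i = 0 then z else x := by
    ext ω
    simp [mem_prefixCylinder, Nat.le_one_iff_eq_zero_or_eq_one, or_imp, forall_and]
  simp [this, measure_prefixCylinder]

lemma exists_pos_transition_to (M : MarkovChain V) {y y' : V} (hne : y ≠ y') :
    ∃ z, 0 < M.p z y' := by
  obtain ⟨n, w, hw0, hwn, hpos⟩ := M.irred y y'
  obtain ⟨n, rfl⟩ := Nat.exists_eq_succ_of_ne_zero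
    (show n ≠ 0 by rintro rfl; exact hne (hw0.symm.trans hwn))
  exact ⟨w n, hwn ▸ hpos n n.lt_succ_self⟩

/-- The σ-algebra on `V` is arbitrary; the chain forces it to separate points. If no measurable
set separated `y` from `y' ≠ y`, the measurable hull of the one-step event `{z → y}` would
contain `{z → y'}` too, so for a predecessor `z` of `y'` the one-step events out of `z` would
carry mass at most `1 - p z y' < 1`. -/
lemma separatesPoints (M : MarkovChain V) : MeasurableSpace.SeparatesPoints V := by
  refine MeasurableSpace.separatesPoints_iff.2 fun y y' hyy' => ?_
  by_contra hne
  obtain ⟨z, hz⟩ := M.exists_pos_transition_to hne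
  set E : V → Set (ℕ → V) := fun x => toMeasurable (M.μ z) {ω | ω 0 = z ∧ ω 1 = x}
  have hy'E : {ω : ℕ → V | ω 0 = z ∧ ω 1 = y'} ⊆ E y := by
    rintro ω ⟨h0, h1⟩
    have hmem : Function.update ω 1 y ∈ E y := subset_toMeasurable _ _ ⟨by simp [h0], by simp⟩
    refine (mem_iff_mem_of_measurableSet_pi (fun i s hs => ?_)
      (measurableSet_toMeasurable _ _)).1 hmem
    rcases eq_or_ne i 1 with rfl | hi
    · simp [h1, hyy' s hs]
    · simp [hi]
  have hcover : univ ⊆ {ω : ℕ → V | ¬ω 0 = z} ∪ ⋃ x : ({y'}ᶜ : Set V), E x := by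
    intro ω _
    by_cases h0 : ω 0 = z
    · refine Or.inr (mem_iUnion.2 ?_)
      by_cases h1 : ω 1 = y'
      · exact ⟨⟨y, hne⟩, hy'E ⟨h0, h1⟩⟩
      · exact ⟨⟨ω 1, h1⟩, subset_toMeasurable _ _ ⟨h0, rfl⟩⟩
    · exact Or.inl h0
  have hsum : HasSum (fun x : ({y'}ᶜ : Set V) => M.p z x) (1 - M.p z y') := by
    refine ((hasSum_singleton y' (M.p z)).hasSum_compl_iff).2 ?_
    simpa using M.p_row_sum z
  have hmass : (1 : ℝ≥0∞) ≤ ENNReal.ofReal (1 - M.p z y') := calc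
    1 = M.μ z univ := measure_univ.symm
    _ ≤ M.μ z {ω | ¬ω 0 = z} + ∑' x : ({y'}ᶜ : Set V), M.μ z (E x) :=
      (measure_mono hcover).trans <| (measure_union_le _ _).trans <|
        add_le_add le_rfl (measure_iUnion_le _)
    _ = ∑' x : ({y'}ᶜ : Set V), ENNReal.ofReal (M.p z x) := by
      simp only [E, measure_toMeasurable, measure_first_step, ae_iff.1 (M.ae_start z), zero_add]
    _ = ENNReal.ofReal (1 - M.p z y') := by
      rw [← ENNReal.ofReal_tsum_of_nonneg (fun _ => M.p_nonneg _ _) hsum.summable, hsum.tsum_eq]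
  linarith [ENNReal.one_le_ofReal.1 hmass]

lemma measurableSingletonClass (M : MarkovChain V) : MeasurableSingletonClass V :=
  @MeasurableSpace.MeasurableSingletonClass.of_separatesPoints _ _ _ M.separatesPoints

lemma measure_prefixCylinder_inter_preimage_prefixCylinder (M : MarkovChain V) (z : V)
    (k m : ℕ) (u w : ℕ → V) :
    M.μ z (prefixCylinder k u ∩ pathShift k ⁻¹' prefixCylinder m w) =
      M.μ z (prefixCylinder k u) * M.μ (u k) (prefixCylinder m w) := by
  by_cases hw : w 0 = u k
  · rw [prefixCylinder_inter_preimage_pathShift hw, measure_prefixCylinder,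
      measure_prefixCylinder, measure_prefixCylinder, prod_range_pathConcat _ hw,
      pathConcat_of_le u w (Nat.zero_le k), if_pos hw]
    split_ifs
    · exact ENNReal.ofReal_mul (Finset.prod_nonneg fun _ _ => M.p_nonneg _ _)
    · simp
  · have hempty : prefixCylinder k u ∩ pathShift k ⁻¹' prefixCylinder m w = ∅ :=
      eq_empty_of_forall_notMem fun ω ⟨hu, hw'⟩ =>
        hw ((hw' 0 (Nat.zero_le m)).symm.trans (by simpa [pathShift] using hu k le_rfl))
    simp [hempty, measure_prefixCylinder, hw]

lemma measure_prefixCylinder_inter_preimage (M : MarkovChain V) (z : V) (k : ℕ) (u : ℕ → V)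
    {B : Set (ℕ → V)} (hB : MeasurableSet B) :
    M.μ z (prefixCylinder k u ∩ pathShift k ⁻¹' B) =
      M.μ z (prefixCylinder k u) * M.μ (u k) B := by
  have := M.measurableSingletonClass
  have hshift := measurable_pathShift (α := V) k
  suffices h : ((M.μ z).restrict (prefixCylinder k u)).map (pathShift k) =
      M.μ z (prefixCylinder k u) • M.μ (u k) by
    simpa [Measure.map_apply hshift hB, Measure.restrict_apply (hshift hB), inter_comm]
      using congrArg (· B) h
  refine ext_of_generate_finite _ measurableSpace_pi_eq_generateFrom_prefixCylinder
    isPiSystem_prefixCylinder ?_ ?_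
  · rintro _ ⟨m, w, rfl⟩
    rw [Measure.map_apply hshift (measurableSet_prefixCylinder m w),
      Measure.restrict_apply (hshift (measurableSet_prefixCylinder m w)), inter_comm]
    exact M.measure_prefixCylinder_inter_preimage_prefixCylinder z k m u w
  · simp [Measure.map_apply hshift MeasurableSet.univ]

lemma mul_measure_le_measure_inter_preimage (M : MarkovChain V) (z : V) {n : ℕ}
    {F : Set (ℕ → V)} (hF : ∀ ω ∈ F, prefixCylinder n ω ⊆ F) {B : Set (ℕ → V)}
    (hB : MeasurableSet B) {c : ℝ≥0∞} (hc : ∀ ω ∈ F, c ≤ M.μ (ω n) B) :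
    c * M.μ z F ≤ M.μ z (F ∩ pathShift n ⁻¹' B) := by
  have := M.measurableSingletonClass
  have hfiber : ∀ t, MeasurableSet (pathPrefix (α := V) n ⁻¹' {t}) :=
    fun t => measurable_pathPrefix n (measurableSet_singleton t)
  rw [← Measure.restrict_apply' (measurable_pathShift n hB), ← preimage_image_pathPrefix hF,
    ← tsum_measure_preimage_singleton (to_countable _) fun t _ => hfiber t,
    ← tsum_measure_preimage_singleton (to_countable _) fun t _ => hfiber t,
    ← ENNReal.tsum_mul_left]
  refine ENNReal.tsum_le_tsum fun ⟨_, ω, hω, rfl⟩ => ?_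
  rw [Measure.restrict_apply (hfiber _), ← prefixCylinder_eq_preimage_pathPrefix,
    M.measure_prefixCylinder_inter_preimage z n ω hB, mul_comm]
  gcongr
  exact hc ω hω

lemma mul_measure_hit_le (M : MarkovChain V) {B : Set (ℕ → V)} (hB : IsTailEvent B)
    {G : Set V} {c : ℝ≥0∞} (hG : ∀ x ∈ G, c ≤ M.μ x B) (z : V) :
    c * M.μ z {ω | ∃ n, ω n ∈ G} ≤ M.μ z B := by
  have := M.measurableSingletonClass
  set hit : ℕ → Set (ℕ → V) := fun n => {ω | ω n ∈ G}
  have hmeas : ∀ n, MeasurableSet (disjointed hit n) :=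
    MeasurableSet.disjointed fun n => measurable_pi_apply n MeasurableSet.of_discrete
  have hfirst : ∀ n, ∀ ω ∈ disjointed hit n, prefixCylinder n ω ⊆ disjointed hit n := by
    intro n ω hω ω' hω'
    simp only [disjointed_eq_inter_compl, mem_inter_iff, mem_iInter, mem_compl_iff, hit,
      mem_ofPred_eq] at hω ⊢
    exact ⟨hω' n le_rfl ▸ hω.1, fun j hj => hω' j hj.le ▸ hω.2 j hj⟩
  calc c * M.μ z {ω | ∃ n, ω n ∈ G} = ∑' n, c * M.μ z (disjointed hit n) := by
        rw [ENNReal.tsum_mul_left, ← measure_iUnion (disjoint_disjointed hit) hmeas,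
          iUnion_disjointed, ofPred_exists]
    _ ≤ ∑' n, M.μ z (disjointed hit n ∩ B) := ENNReal.tsum_le_tsum fun n => by
        simpa [preimage_pathShift_of_shift_invariant hB.2] using
          M.mul_measure_le_measure_inter_preimage z (hfirst n) hB.1
            fun ω hω => hG _ (disjointed_subset hit n hω)
    _ = M.μ z (⋃ n, disjointed hit n ∩ B) :=
        (measure_iUnion ((disjoint_disjointed hit).mono fun _ _ h =>
          h.mono inter_subset_left inter_subset_left) fun n => (hmeas n).inter hB.1).symm
    _ ≤ M.μ z B := measure_mono (iUnion_subset fun _ => inter_subset_right)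

lemma toReal_measure_compl (M : MarkovChain V) {A : Set (ℕ → V)} (hA : MeasurableSet A)
    (x : V) : (M.μ x Aᶜ).toReal = 1 - (M.μ x A).toReal := by
  simp only [← measureReal_def, probReal_compl_eq_one_sub hA]

lemma tailSmall_eq_tailBig_compl (M : MarkovChain V) {A : Set (ℕ → V)} (hA : MeasurableSet A)
    (r : ℝ) : tailSmall M A r = tailBig M Aᶜ r := by
  ext x
  simp only [tailSmall, tailBig, mem_ofPred_eq, M.toReal_measure_compl hA]
  constructor <;> intro <;> linarith

lemma exists_path_of_mem_tailBig (M : MarkovChain V) {A : Set (ℕ → V)} (hA : IsTailEvent A)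
    {ε κ : ℝ} (hε : 0 < ε) (hκ : 0 < κ) (U : Set V) {v : V} (hv : v ∈ tailBig M A ε)
    (hhit : κ ≤ (M.μ v {ω : ℕ → V | ∃ n, ω n ∈ U}).toReal) :
    ∃ (m : ℕ) (w : ℕ → V), w 0 = v ∧ w m ∈ U ∧
      (∀ i < m, 0 < M.p (w i) (w (i + 1))) ∧ ∀ i ≤ m, w i ∈ tailBig M A (ε / κ) := by
  by_contra! hnone
  set G := (tailBig M A (ε / κ))ᶜ
  have hleave : M.μ v {ω | ∃ n, ω n ∈ U} ≤ M.μ v {ω | ∃ n, ω n ∈ G} := by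
    refine measure_mono_ae ?_
    filter_upwards [M.ae_start v, M.ae_pos_step v] with ω h0 hpos ⟨n, hn⟩
    obtain ⟨i, -, hi⟩ := hnone n ω h0 hn fun i _ => hpos i
    exact ⟨i, hi⟩
  have hG : ∀ x ∈ G, ENNReal.ofReal (ε / κ) ≤ M.μ x Aᶜ := by
    intro x hx
    rw [ENNReal.ofReal_le_iff_le_toReal (measure_ne_top _ _), M.toReal_measure_compl hA.1]
    simp only [G, tailBig, mem_compl_iff, mem_ofPred_eq, not_lt] at hx
    linarith
  have hfail : ε ≤ (M.μ v Aᶜ).toReal := calc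
    ε = ε / κ * κ := by field_simp
    _ ≤ ε / κ * (M.μ v {ω | ∃ n, ω n ∈ G}).toReal := by
      gcongr
      exact hhit.trans (ENNReal.toReal_mono (measure_ne_top _ _) hleave)
    _ = (ENNReal.ofReal (ε / κ) * M.μ v {ω | ∃ n, ω n ∈ G}).toReal := by
      rw [ENNReal.toReal_mul, ENNReal.toReal_ofReal (by positivity)]
    _ ≤ (M.μ v Aᶜ).toReal :=
      ENNReal.toReal_mono (measure_ne_top _ _) (M.mul_measure_hit_le hA.compl hG v)
  rw [M.toReal_measure_compl hA.1] at hfail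
  exact (not_lt.2 hfail) (by simp only [tailBig, mem_ofPred_eq] at hv; linarith)

end MarkovChain

theorem tail_event_path_general (M : MarkovChain V) (A : Set (ℕ → V)) (hA : IsTailEvent A)
    (ε κ : ℝ) (hε : 0 < ε) (hκ : κ ∈ Set.Ioc (0 : ℝ) 1)
    (U : Set V) :
    (∀ v ∈ tailBig M A ε,
      κ ≤ (M.μ v {ω : ℕ → V | ∃ n, ω n ∈ U}).toReal →
      ∃ (m : ℕ) (w : ℕ → V), w 0 = v ∧ w m ∈ U ∧
        (∀ i < m, 0 < M.p (w i) (w (i + 1))) ∧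
        ∀ i ≤ m, w i ∈ tailBig M A (ε / κ)) ∧
    (∀ v ∈ tailSmall M A ε,
      κ ≤ (M.μ v {ω : ℕ → V | ∃ n, ω n ∈ U}).toReal →
      ∃ (m : ℕ) (w : ℕ → V), w 0 = v ∧ w m ∈ U ∧
        (∀ i < m, 0 < M.p (w i) (w (i + 1))) ∧
        ∀ i ≤ m, w i ∈ tailSmall M A (ε / κ)) := by
  refine ⟨fun v hv hhit => M.exists_path_of_mem_tailBig hA hε hκ.1 U hv hhit,
    fun v hv hhit => ?_⟩
  simp only [M.tailSmall_eq_tailBig_compl hA.1] at hv ⊢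
  exact M.exists_path_of_mem_tailBig hA.compl hε hκ.1 U hv hhit

/-- If `v ∈ A_ε` and the chain started at `v` visits `U` with
probability at least `κ`, then there is a `v`–`U` path (along positive transition
probabilities) all of whose vertices lie in `A_{ε/κ}`; and likewise with `Z` in
place of `A`. -/
theorem tail_event_path (M : MarkovChain V) (A : Set (ℕ → V)) (hA : IsTailEvent A)
    (ε κ : ℝ) (hε : 0 < ε) (hκ : κ ∈ Set.Ioc (0 : ℝ) 1) (hεκ : ε / κ ≤ 1/2)
    (U : Set V) :
    (∀ v ∈ tailBig M A ε,
      κ ≤ (M.μ v {ω : ℕ → V | ∃ n, ω n ∈ U}).toReal →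
      ∃ (m : ℕ) (w : ℕ → V), w 0 = v ∧ w m ∈ U ∧
        (∀ i < m, 0 < M.p (w i) (w (i + 1))) ∧
        ∀ i ≤ m, w i ∈ tailBig M A (ε / κ)) ∧
    (∀ v ∈ tailSmall M A ε,
      κ ≤ (M.μ v {ω : ℕ → V | ∃ n, ω n ∈ U}).toReal →
      ∃ (m : ℕ) (w : ℕ → V), w 0 = v ∧ w m ∈ U ∧
        (∀ i < m, 0 < M.p (w i) (w (i + 1))) ∧
        ∀ i ≤ m, w i ∈ tailSmall M A (ε / κ)) :=
  tail_event_path_general M A hA ε κ hε hκ U
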